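/- Let ℤ[C] be the free ℤ-module on the set C of all cyclic words of F_n, and let π : ℤ[C] → Π_{k≥1} M_k be the ℤ-linear map whose k-th component is the linear extension of π_k. Then the kernel of π equals the ℤ-submodule of ℤ[C] generated by the elements l·[w] − [w^l], where w ranges over nonempty cyclically reduced words and l over positive integers. -/

import Mathlib

open List

/-- A letter of the free group `F_n`: a generator index together with a sign. -/
abbrev Letter (n : ℕ) := Fin n × Bool

/-- The inverse of a letter. -/
def linv {n : ℕ} (a : Letter n) : Letter n := (a.1, !a.2)

@[simp] lemma linv_linv {n : ℕ} (a : Letter n) : linv (linv a) = a := by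
  cases a with
  | mk x b => simp [linv]

/-- The (formal) inverse of a word. -/
def wInv {n : ℕ} (w : List (Letter n)) : List (Letter n) := (w.map linv).reverse

@[simp] lemma wInv_wInv {n : ℕ} (w : List (Letter n)) : wInv (wInv w) = w := by
  simp [wInv, Function.comp_def]

/-- A word is reduced if no two consecutive letters are mutually inverse. -/
def Reduced {n : ℕ} (w : List (Letter n)) : Prop :=
  List.Chain' (fun a b => b ≠ linv a) w

/-- A word is cyclically reduced if it is reduced and its first and last letters
are not mutually inverse. -/
def CyclicallyReduced {n : ℕ} (w : List (Letter n)) : Prop :=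
  Reduced w ∧ ∀ a b, w.head? = some a → w.getLast? = some b → a ≠ linv b

/-- `lpow l m` is the `m`-fold concatenation of the list `l` with itself. -/
def lpow {α : Type*} (l : List α) : ℕ → List α
  | 0 => []
  | m + 1 => l ++ lpow l m

/-- The number of oriented occurrences of `u` in the cyclic word represented by `w`. -/
def orientedOcc {n : ℕ} (u w : List (Letter n)) : ℕ :=
  ((Finset.range w.length).filter (fun i => u <+: lpow (w.rotate i) (u.length + 1))).card

/-- `occ u w` : occurrences of the unoriented word `{u, u⁻¹}` in the cyclic word
represented by `w`. -/
def occ {n : ℕ} (u w : List (Letter n)) : ℕ :=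
  orientedOcc u w + orientedOcc (wInv u) w

lemma occ_wInv {n : ℕ} (u w : List (Letter n)) : occ (wInv u) w = occ u w := by
  simp [occ, wInv_wInv, Nat.add_comm]

/-- Occurrences of `u` as a contiguous factor of `w`. -/
def factOcc {n : ℕ} (u w : List (Letter n)) : ℕ :=
  ((Finset.range (w.length + 1)).filter (fun i => u <+: w.drop i)).card

/-- `occf u w` : occurrences of `{u, u⁻¹}` as a contiguous factor of `w`. -/
def occf {n : ℕ} (u w : List (Letter n)) : ℕ := factOcc u w + factOcc (wInv u) w

/-- Two cyclically reduced words represent the same cyclic word iff one is a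
rotation of the other or of its inverse. -/
def SameCyclicWord {n : ℕ} (v w : List (Letter n)) : Prop :=
  (∃ i, w = v.rotate i) ∨ (∃ i, w = (wInv v).rotate i)

/-- Cyclic reduction: repeatedly delete the first and last letter while they are
mutually inverse. -/
def cyclicReduce {n : ℕ} : List (Letter n) → List (Letter n)
  | [] => []
  | a :: rest =>
    if rest.getLast? = some (linv a) then cyclicReduce rest.dropLast
    else a :: rest
  termination_by w => w.length
  decreasing_by all_goals simp [List.length_dropLast]

/-- Oriented reduced words of length `k`. -/
structure RW (n k : ℕ) where
  val : List (Letter n)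
  red : Reduced val
  len : val.length = k

instance (n k : ℕ) : DecidableEq (RW n k) := fun a b =>
  decidable_of_iff (a.val = b.val)
    ⟨fun h => by cases a; cases b; cases h; rfl, fun h => congrArg RW.val h⟩

/-- Identify a reduced word with its inverse: the quotient is the set `W_k` of
unoriented words of length `k`. -/
instance uwSetoid (n k : ℕ) : Setoid (RW n k) where
  r u v := v.val = u.val ∨ v.val = wInv u.val
  iseqv := by
    refine ⟨fun u => Or.inl rfl, ?_, ?_⟩
    · rintro u v (h | h)
      · exact Or.inl h.symm
      · exact Or.inr (by rw [h, wInv_wInv])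
    · rintro u v w (h1 | h1) (h2 | h2)
      · exact Or.inl (h2.trans h1)
      · exact Or.inr (h2.trans (congrArg wInv h1))
      · exact Or.inr (h2.trans h1)
      · exact Or.inl (by rw [h2, h1, wInv_wInv])

instance (n k : ℕ) : ∀ a b : RW n k, Decidable (a ≈ b) := fun a b =>
  show Decidable (b.val = a.val ∨ b.val = wInv a.val) from inferInstance

/-- `W_k` : unoriented reduced words of length `k`. -/
abbrev UW (n k : ℕ) := Quotient (uwSetoid n k)

def toVec (n k : ℕ) (u : RW n k) : List.Vector (Letter n) k := ⟨u.val, u.len⟩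

lemma toVec_inj (n k : ℕ) : Function.Injective (toVec n k) := by
  intro a b h
  have h' : a.val = b.val := congrArg Subtype.val h
  cases a; cases b; cases h'; rfl

noncomputable instance (n k : ℕ) : Fintype (RW n k) :=
  Fintype.ofInjective _ (toVec_inj n k)

noncomputable example (n k : ℕ) : Fintype (UW n k) := inferInstance
noncomputable example (n k : ℕ) : DecidableEq (UW n k) := inferInstance

/-- `M_k` : the free ℤ-module on `W_k`, realized as functions `W_k → ℤ`. -/
abbrev Mk (n k : ℕ) := UW n k → ℤ

/-- `π_k` of the cyclic word represented by `w` : the vector of occurrence counts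
of unoriented words of length `k`. -/
def pik (n k : ℕ) (w : List (Letter n)) : Mk n k :=
  Quotient.lift (fun u : RW n k => (occ u.val w : ℤ)) (by
    intro a b hab
    have h : occ a.val w = occ b.val w := by
      rcases hab with h | h
      · rw [h]
      · rw [h, occ_wInv]
    show ((occ a.val w : ℕ) : ℤ) = ((occ b.val w : ℕ) : ℤ)
    rw [h])

lemma Reduced.drop' {n : ℕ} {w : List (Letter n)} (h : Reduced w) (m : ℕ) :
    Reduced (w.drop m) :=
  List.IsChain.suffix h (List.drop_suffix m w)

lemma Reduced.dropLast' {n : ℕ} {w : List (Letter n)} (h : Reduced w) :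
    Reduced w.dropLast :=
  List.IsChain.prefix h (List.dropLast_prefix w)

/-- The unoriented `(k-1)`-suffix of an oriented word of length `k`. -/
def sufC {n k : ℕ} (w : RW n k) : UW n (k - 1) :=
  Quotient.mk (uwSetoid n (k - 1)) ⟨w.val.drop 1, w.red.drop' 1, by simp [w.len]⟩

/-- The unoriented `(k-1)`-prefix of an oriented word of length `k`. -/
def preC {n k : ℕ} (w : RW n k) : UW n (k - 1) :=
  Quotient.mk (uwSetoid n (k - 1)) ⟨w.val.dropLast, w.red.dropLast', by simp [w.len]⟩

/-- Matrix of `p←_k` w.r.t. the orientation section `σ`: a basis element `w̄` of `M_k`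
is sent to the sum of the unoriented `(k-1)`-words at its outward-pointing ends. -/
noncomputable def AOut (n k : ℕ) (σ : List (Letter n) → List (Letter n)) :
    Matrix (UW n (k - 1)) (UW n k) ℤ := fun ub wb =>
  ∑ w : RW n k,
    if Quotient.mk (uwSetoid n k) w = wb ∧ σ w.val = w.val then
      ((if sufC w = ub ∧ σ (w.val.drop 1) = w.val.drop 1 then 1 else 0) +
       (if preC w = ub ∧ σ (w.val.dropLast) = wInv (w.val.dropLast) then 1 else 0))
    else 0

/-- Matrix of `p→_k` : inward-pointing ends. -/
noncomputable def AIn (n k : ℕ) (σ : List (Letter n) → List (Letter n)) :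
    Matrix (UW n (k - 1)) (UW n k) ℤ := fun ub wb =>
  ∑ w : RW n k,
    if Quotient.mk (uwSetoid n k) w = wb ∧ σ w.val = w.val then
      ((if sufC w = ub ∧ σ (w.val.drop 1) = wInv (w.val.drop 1) then 1 else 0) +
       (if preC w = ub ∧ σ (w.val.dropLast) = w.val.dropLast then 1 else 0))
    else 0

/-- `p←_k : M_k → M_{k-1}`. -/
noncomputable def pOut (n k : ℕ) (σ : List (Letter n) → List (Letter n)) :
    Mk n k →ₗ[ℤ] Mk n (k - 1) := (AOut n k σ).mulVecLin

/-- `p→_k : M_k → M_{k-1}`. -/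
noncomputable def pIn (n k : ℕ) (σ : List (Letter n) → List (Letter n)) :
    Mk n k →ₗ[ℤ] Mk n (k - 1) := (AIn n k σ).mulVecLin

/-- Nonempty cyclically reduced words: representatives of cyclic words. -/
abbrev CWS (n : ℕ) := {w : List (Letter n) // w ≠ [] ∧ CyclicallyReduced w}

/-- "Represents the same cyclic word". -/
def cwrel (n : ℕ) : CWS n → CWS n → Prop := fun v w => SameCyclicWord v.1 w.1

/-- The set `C` of cyclic words. -/
def CWord (n : ℕ) := Quot (cwrel n)

/-- A representative of a cyclic word. -/
noncomputable def cwOut {n : ℕ} (W : CWord n) : CWS n := (Quot.exists_rep W).choose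

/-- `ℤ[C]` : the free ℤ-module on the set of cyclic words. -/
abbrev ZC (n : ℕ) := CWord n →₀ ℤ

/-- `π : ℤ[C] → Π_{k ≥ 1} M_k`, the linear map whose `k`-th component is the
linear extension of `π_k`. -/
noncomputable def piMap (n : ℕ) : ZC n →ₗ[ℤ] (∀ k : ℕ, Mk n (k + 1)) :=
  Finsupp.lift (∀ k : ℕ, Mk n (k + 1)) ℤ (CWord n)
    (fun W => fun k => pik n (k + 1) (cwOut W).1)

/-! Occurrence counts are invariant under rotation and inversion of a cyclic word and get
multiplied by `l` when the word is replaced by its `l`-th power; hence the relations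
`l • [w] - [w ^ l]` lie in the kernel of `π`, and modulo them every element of `ℤ[C]` is a
combination of primitive cyclic words. Their images are linearly independent: if a `p`-periodic
and a `q`-periodic sequence agree on `p + q` consecutive terms they coincide, so for primitive
`v` the factor of length `k ≥ |v| + |w|` of `v v v …` occurs in a primitive `w` only when
`[w] = [v]`; its count then isolates the coefficient of `[v]`. -/

open Function
open scoped Finset

section Lpow

variable {α : Type*}

@[simp] lemma lpow_nil (m : ℕ) : lpow ([] : List α) m = [] := by
  induction m <;> simp_all [lpow]

@[simp] lemma lpow_length (l : List α) (m : ℕ) : (lpow l m).length = m * l.length := by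
  induction m with
  | zero => simp [lpow]
  | succ m ih => simp [lpow, ih, Nat.succ_mul, Nat.add_comm]

lemma lpow_add (l : List α) (a b : ℕ) : lpow l (a + b) = lpow l a ++ lpow l b := by
  induction a with
  | zero => simp [lpow]
  | succ a ih => simp [Nat.succ_add, lpow, ih]

lemma lpow_succ' (l : List α) (m : ℕ) : lpow l (m + 1) = lpow l m ++ l := by
  rw [lpow_add]; simp [lpow]

lemma lpow_lpow (l : List α) (a b : ℕ) : lpow (lpow l a) b = lpow l (a * b) := by
  induction b with
  | zero => simp [lpow]
  | succ b ih => rw [lpow, ih, ← lpow_add, Nat.mul_succ, Nat.add_comm]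

lemma getElem?_lpow (l : List α) {m j : ℕ} (hj : j < m * l.length) :
    (lpow l m)[j]? = l[j % l.length]? := by
  induction m generalizing j with
  | zero => omega
  | succ m ih =>
    rw [lpow]
    rcases lt_or_ge j l.length with h | h
    · rw [getElem?_append_left h, Nat.mod_eq_of_lt h]
    · rw [getElem?_append_right h, ih (by rw [Nat.succ_mul] at hj; omega),
        Nat.mod_eq_sub_mod h]

lemma head?_lpow (l : List α) {m : ℕ} (hm : 0 < m) : (lpow l m).head? = l.head? := by
  obtain ⟨m, rfl⟩ : ∃ m', m = m' + 1 := ⟨m - 1, by omega⟩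
  cases l <;> simp [lpow]

lemma getLast?_lpow (l : List α) {m : ℕ} (hm : 0 < m) : (lpow l m).getLast? = l.getLast? := by
  obtain ⟨m, rfl⟩ : ∃ m', m = m' + 1 := ⟨m - 1, by omega⟩
  rcases eq_or_ne l [] with rfl | hl
  · simp
  · rw [lpow_succ', getLast?_append_of_ne_nil _ hl]

end Lpow

section WordInverse

variable {n : ℕ}

@[simp] lemma wInv_length (w : List (Letter n)) : (wInv w).length = w.length := by
  simp [wInv]

@[simp] lemma wInv_eq_nil {w : List (Letter n)} : wInv w = [] ↔ w = [] := by
  simp [wInv]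

lemma wInv_append (u v : List (Letter n)) : wInv (u ++ v) = wInv v ++ wInv u := by
  simp [wInv]

lemma wInv_lpow (w : List (Letter n)) (m : ℕ) : wInv (lpow w m) = lpow (wInv w) m := by
  induction m with
  | zero => simp [lpow, wInv]
  | succ m ih => rw [lpow, wInv_append, ih, lpow_succ']

lemma getElem?_wInv (w : List (Letter n)) {j : ℕ} (hj : j < w.length) :
    (wInv w)[j]? = w[w.length - 1 - j]?.map linv := by
  rw [wInv, getElem?_reverse (by simpa using hj), getElem?_map, length_map]

@[simp] lemma option_map_linv_linv (x : Option (Letter n)) : (x.map linv).map linv = x := by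
  cases x <;> simp

end WordInverse

lemma Function.periodic_comp_add_right_iff {β : Type*} {f : ℤ → β} {c : ℤ} (a : ℤ) :
    Periodic (fun t => f (t + a)) c ↔ Periodic f c :=
  ⟨fun h => by simpa using h.add_const (-a), fun h => h.add_const a⟩

namespace Function.Periodic

variable {α : Type*} {f g : ℤ → α} {p q : ℕ}

lemma map_emod (hf : Periodic f q) (t : ℤ) : f (t % q) = f t := by
  simpa [Int.emod_def, mul_comm] using (hf.int_mul (t / q)).sub_eq t

lemma gcd (hp : Periodic f p) (hq : Periodic f q) : Periodic f (Nat.gcd p q) := by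
  rw [Nat.gcd_eq_gcd_ab]
  simpa [mul_comm] using (hp.int_mul (Nat.gcdA p q)).add_period (hq.int_mul (Nat.gcdB p q))

lemma eq_of_eqOn_Ico (hq : 0 < q) (hf : Periodic f q) (hg : Periodic g q)
    (h : Set.EqOn f g (Set.Ico 0 q)) : f = g := by
  funext t
  rw [← hf.map_emod, ← hg.map_emod]
  exact h ⟨Int.emod_nonneg t (by omega), Int.emod_lt_of_pos t (by omega)⟩

lemma of_eqOn_Ico_add (hp : 0 < p) (hf : Periodic f p) (hg : Periodic g q)
    (h : Set.EqOn f g (Set.Ico 0 (p + q))) : Periodic f q := by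
  intro t
  have h0 : 0 ≤ t % p := Int.emod_nonneg t (by omega)
  have h1 : t % p < p := Int.emod_lt_of_pos t (by omega)
  have hshift : t % p + q + t / p * p = t + q := by linarith [Int.emod_add_mul_ediv t p]
  calc f (t + q) = f (t % p + q) := by rw [← hshift]; simpa using hf.int_mul (t / p) (t % p + q)
    _ = g (t % p + q) := h ⟨by omega, by omega⟩
    _ = g (t % p) := hg _
    _ = f (t % p) := (h ⟨h0, by omega⟩).symm
    _ = f t := hf.map_emod t

lemma eq_of_eqOn_Ico_add (hp : 0 < p) (hq : 0 < q) (hf : Periodic f p) (hg : Periodic g q)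
    (h : Set.EqOn f g (Set.Ico 0 (p + q))) : f = g :=
  (hf.of_eqOn_Ico_add hp hg h).eq_of_eqOn_Ico hq hg
    (h.mono (Set.Ico_subset_Ico_right (by omega)))

variable {M : Type*} [AddCommMonoid M] {f : ℤ → M} {L : ℕ}

lemma sum_range_add (hf : Periodic f L) (r : ℤ) :
    ∑ i ∈ Finset.range L, f (i + r) = ∑ i ∈ Finset.range L, f i := by
  have hstep (r : ℤ) :
      ∑ i ∈ Finset.range L, f (i + (r + 1)) = ∑ i ∈ Finset.range L, f (i + r) := by
    cases L with
    | zero => simp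
    | succ L =>
      rw [Finset.sum_range_succ, Finset.sum_range_succ']
      congr 1
      · exact Finset.sum_congr rfl fun i _ => by push_cast; ring_nf
      · exact (congrArg f (by push_cast; ring)).trans (hf _)
  induction r using Int.induction_on with
  | zero => simp
  | succ k ih => rw [hstep, ih]
  | pred k ih => rw [← ih, ← hstep, sub_add_cancel]

lemma sum_range_sub (hf : Periodic f L) (c : ℤ) :
    ∑ i ∈ Finset.range L, f (c - i) = ∑ i ∈ Finset.range L, f i := by
  rw [← Finset.sum_range_reflect, ← hf.sum_range_add (c - L + 1)]
  refine Finset.sum_congr rfl fun i hi => ?_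
  congr 1
  have := Finset.mem_range.1 hi
  rw [Nat.sub_sub, Nat.cast_sub (by omega)]
  push_cast
  ring

lemma sum_range_mul (hf : Periodic f L) (l : ℕ) :
    ∑ i ∈ Finset.range (l * L), f i = l • ∑ i ∈ Finset.range L, f i := by
  induction l with
  | zero => simp
  | succ l ih =>
    rw [Nat.succ_mul, Finset.sum_range_add, ih, succ_nsmul]
    congr 1
    refine Finset.sum_congr rfl fun i _ => ?_
    simpa [add_comm] using hf.nat_mul l i

variable {P : ℤ → Prop} [DecidablePred P]

lemma ite_one_zero (hP : Periodic P L) : Periodic (fun t => if P t then 1 else 0 : ℤ → ℕ) L :=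
  fun t => by simp only [hP t]

lemma card_filter_range_add (hP : Periodic P L) (r : ℤ) :
    #{i ∈ Finset.range L | P ((i : ℕ) + r)} = #{i ∈ Finset.range L | P (i : ℕ)} := by
  simpa only [Finset.card_filter] using hP.ite_one_zero.sum_range_add r

lemma card_filter_range_sub (hP : Periodic P L) (c : ℤ) :
    #{i ∈ Finset.range L | P (c - (i : ℕ))} = #{i ∈ Finset.range L | P (i : ℕ)} := by
  simpa only [Finset.card_filter] using hP.ite_one_zero.sum_range_sub c

lemma card_filter_range_mul (hP : Periodic P L) (l : ℕ) :
    #{i ∈ Finset.range (l * L) | P (i : ℕ)} = l * #{i ∈ Finset.range L | P (i : ℕ)} := by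
  simpa only [Finset.card_filter, smul_eq_mul] using hP.ite_one_zero.sum_range_mul l

end Function.Periodic

section CyclicGet

variable {α : Type*}

/-- Position `t` of the bi-infinite word `… w w w …`, position `0` being the first letter of `w`;
it is `none` only for `w = []`. -/
def cyclicGet (w : List α) (t : ℤ) : Option α := w[(t % w.length).toNat]?

@[simp] lemma cyclicGet_nil (t : ℤ) : cyclicGet ([] : List α) t = none := by
  simp [cyclicGet]

lemma cyclicGet_periodic (w : List α) : Periodic (cyclicGet w) w.length := fun t => by
  simp [cyclicGet]

lemma cyclicGet_natCast (w : List α) (j : ℕ) : cyclicGet w j = w[j % w.length]? := by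
  rw [cyclicGet, ← Int.natCast_mod, Int.toNat_natCast]

lemma cyclicGet_natCast_of_lt {w : List α} {j : ℕ} (hj : j < w.length) :
    cyclicGet w j = w[j]? := by
  rw [cyclicGet_natCast, Nat.mod_eq_of_lt hj]

lemma cyclicGet_eq_of_periodic {w : List α} (hw : w ≠ []) {g : ℤ → Option α}
    (hg : Periodic g w.length) (h : ∀ j < w.length, w[j]? = g j) : cyclicGet w = g := by
  refine (cyclicGet_periodic w).eq_of_eqOn_Ico (length_pos_iff.2 hw) hg fun t ht => ?_
  lift t to ℕ using ht.1
  rw [cyclicGet_natCast_of_lt (by simpa using ht.2), h _ (by simpa using ht.2)]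

lemma eq_of_cyclicGet_eq {v w : List α} (hlen : v.length = w.length)
    (h : cyclicGet v = cyclicGet w) : v = w := by
  refine ext_getElem? fun j => ?_
  by_cases hj : j < v.length
  · rw [← cyclicGet_natCast_of_lt hj, h, cyclicGet_natCast_of_lt (hlen ▸ hj)]
  · rw [getElem?_eq_none (by omega), getElem?_eq_none (by omega)]

lemma cyclicGet_rotate (w : List α) (r : ℕ) :
    cyclicGet (w.rotate r) = fun t => cyclicGet w (t + r) := by
  rcases eq_or_ne w [] with rfl | hw
  · funext; simp
  refine cyclicGet_eq_of_periodic (by simpa using hw)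
    (by simpa using (cyclicGet_periodic w).add_const (r : ℤ)) fun j hj => ?_
  rw [length_rotate] at hj
  rw [getElem?_rotate hj, ← cyclicGet_natCast]
  push_cast
  rfl

lemma cyclicGet_lpow (w : List α) {l : ℕ} (hl : 0 < l) : cyclicGet (lpow w l) = cyclicGet w := by
  rcases eq_or_ne w [] with rfl | hw
  · simp
  refine cyclicGet_eq_of_periodic ?_ ?_ fun j hj => ?_
  · simpa [← length_pos_iff] using ⟨hl, length_pos_iff.2 hw⟩
  · simpa using (cyclicGet_periodic w).nat_mul l
  · rw [lpow_length] at hj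
    rw [getElem?_lpow w hj, cyclicGet_natCast]

lemma cyclicGet_wInv {n : ℕ} (w : List (Letter n)) :
    cyclicGet (wInv w) = fun t => (cyclicGet w (-1 - t)).map linv := by
  rcases eq_or_ne w [] with rfl | hw
  · funext; simp [wInv]
  refine cyclicGet_eq_of_periodic (by simpa using hw) (fun t => ?_) fun j hj => ?_
  · simp only [wInv_length, sub_add_eq_sub_sub, (cyclicGet_periodic w).sub_eq]
  · rw [wInv_length] at hj
    rw [getElem?_wInv w hj, ← cyclicGet_natCast_of_lt (by omega : w.length - 1 - j < w.length),
      ← (cyclicGet_periodic w).sub_eq]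
    congr 2
    push_cast [Nat.sub_sub, Nat.cast_sub (by omega : 1 + j ≤ w.length)]
    ring

end CyclicGet

section Primitive

variable {α : Type*}

def Primitive (w : List α) : Prop :=
  w ≠ [] ∧ ∀ u m, w = lpow u m → m ≤ 1

lemma eq_lpow_take_of_periodic {w : List α} {d : ℕ} (hd : 0 < d) (hdvd : d ∣ w.length)
    (h : Periodic (cyclicGet w) d) : w = lpow (w.take d) (w.length / d) := by
  rcases eq_or_ne w [] with rfl | hw
  · simp
  have hdL : d ≤ w.length := Nat.le_of_dvd (length_pos_iff.2 hw) hdvd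
  have htake : cyclicGet (w.take d) = cyclicGet w :=
    cyclicGet_eq_of_periodic (by simpa using ⟨hd.ne', hw⟩) (by simpa [hdL] using h)
      fun j hj => by
        rw [length_take, lt_min_iff] at hj
        rw [getElem?_take_of_lt hj.1, cyclicGet_natCast_of_lt hj.2]
  refine eq_of_cyclicGet_eq ?_ ?_
  · simp [hdL, Nat.div_mul_cancel hdvd]
  · rw [cyclicGet_lpow _ (Nat.div_pos hdL hd), htake]

lemma Primitive.dvd_of_periodic {w : List α} (hw : Primitive w) {d : ℕ} (hd : 0 < d)
    (h : Periodic (cyclicGet w) d) : w.length ∣ d := by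
  have hL : 0 < w.length := length_pos_iff.2 hw.1
  set g := Nat.gcd d w.length
  have hg : 0 < g := Nat.gcd_pos_of_pos_left _ hd
  have hgL : g ∣ w.length := Nat.gcd_dvd_right d w.length
  have hle := hw.2 _ _ (eq_lpow_take_of_periodic hg hgL (h.gcd (cyclicGet_periodic w)))
  have hgw : g = w.length := by
    obtain ⟨c, hc⟩ := hgL
    rw [hc, Nat.mul_div_cancel_left _ hg] at hle
    interval_cases c <;> simp_all
  exact hgw ▸ Nat.gcd_dvd_left d w.length

lemma primitive_iff_forall_periodic {w : List α} :
    Primitive w ↔ w ≠ [] ∧ ∀ d : ℕ, 0 < d → Periodic (cyclicGet w) d → w.length ∣ d := by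
  refine ⟨fun hw => ⟨hw.1, fun _ => hw.dvd_of_periodic⟩, fun ⟨hw, h⟩ => ⟨hw, fun u m hum => ?_⟩⟩
  subst hum
  have hu : u ≠ [] := by rintro rfl; simp at hw
  have hm : 0 < m := Nat.pos_of_ne_zero (by rintro rfl; simp [lpow] at hw)
  have := Nat.le_of_dvd (length_pos_iff.2 hu)
    (h u.length (length_pos_iff.2 hu) (cyclicGet_lpow u hm ▸ cyclicGet_periodic u))
  rw [lpow_length] at this
  exact (mul_le_iff_le_one_left (length_pos_iff.2 hu)).1 this

@[simp] lemma primitive_rotate_iff {w : List α} (r : ℕ) : Primitive (w.rotate r) ↔ Primitive w := by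
  simp only [primitive_iff_forall_periodic, cyclicGet_rotate, periodic_comp_add_right_iff,
    length_rotate, ne_eq, rotate_eq_nil_iff]

@[simp] lemma primitive_wInv_iff {n : ℕ} {w : List (Letter n)} :
    Primitive (wInv w) ↔ Primitive w := by
  suffices ∀ w : List (Letter n), Primitive w → Primitive (wInv w) from
    ⟨fun h => by simpa using this _ h, this w⟩
  exact fun w hw =>
    ⟨by simpa using hw.1, fun u m h => hw.2 (wInv u) m (by rw [← wInv_lpow, ← h, wInv_wInv])⟩

lemma SameCyclicWord.primitive_iff {n : ℕ} {v w : List (Letter n)} (h : SameCyclicWord v w) :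
    Primitive w ↔ Primitive v := by
  rcases h with ⟨i, rfl⟩ | ⟨i, rfl⟩ <;> simp

lemma exists_primitive_lpow {w : List α} (hw : w ≠ []) :
    ∃ u m, Primitive u ∧ 0 < m ∧ w = lpow u m := by
  induction hN : w.length using Nat.strong_induction_on generalizing w with
  | _ N ih =>
    by_cases hp : Primitive w
    · exact ⟨w, 1, hp, one_pos, by simp [lpow]⟩
    obtain ⟨u, m, rfl, hm⟩ : ∃ u m, w = lpow u m ∧ 1 < m := by
      simpa [Primitive, hw] using hp
    have hu : u ≠ [] := by rintro rfl; simp at hw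
    have hlt : u.length < N := by
      rw [← hN, lpow_length]
      exact lt_mul_left (length_pos_iff.2 hu) hm
    obtain ⟨r, k, hr, hk, rfl⟩ := ih _ hlt hu rfl
    exact ⟨r, k * m, hr, Nat.mul_pos hk (by omega), lpow_lpow r k m⟩

end Primitive

section Occurrences

variable {α : Type*}

def OccursAt (u w : List α) (i : ℤ) : Prop :=
  ∀ j < u.length, u[j]? = cyclicGet w (i + j)

instance [DecidableEq α] (u w : List α) (i : ℤ) : Decidable (OccursAt u w i) := by
  unfold OccursAt; infer_instance

lemma occursAt_periodic (u w : List α) : Periodic (OccursAt u w) w.length := fun i => by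
  have h : ∀ t, cyclicGet w (t + w.length) = cyclicGet w t := cyclicGet_periodic w
  simp only [OccursAt, add_right_comm i, h]

lemma occursAt_rotate (u w : List α) (r : ℕ) (i : ℤ) :
    OccursAt u (w.rotate r) i ↔ OccursAt u w (i + r) := by
  simp only [OccursAt, cyclicGet_rotate, add_right_comm i]

lemma occursAt_lpow (u w : List α) {l : ℕ} (hl : 0 < l) (i : ℤ) :
    OccursAt u (lpow w l) i ↔ OccursAt u w i := by
  simp only [OccursAt, cyclicGet_lpow w hl]

lemma prefix_lpow_rotate_iff (u w : List α) (hw : w ≠ []) (i : ℕ) :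
    u <+: lpow (w.rotate i) (u.length + 1) ↔ OccursAt u w i := by
  have hL := length_pos_iff.2 hw
  rw [prefix_iff_getElem?]
  refine forall₂_congr fun j hj => ?_
  have hjx : j < (lpow (w.rotate i) (u.length + 1)).length := by
    rw [lpow_length, length_rotate]
    nlinarith
  rw [← cyclicGet_natCast_of_lt hjx, cyclicGet_lpow _ (Nat.succ_pos _), cyclicGet_rotate,
    getElem?_eq_getElem hj, add_comm, eq_comm]

variable {n : ℕ}

lemma orientedOcc_eq_card (u w : List (Letter n)) :
    orientedOcc u w = #{i ∈ Finset.range w.length | OccursAt u w (i : ℕ)} := by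
  rcases eq_or_ne w [] with rfl | hw
  · simp [orientedOcc]
  exact congrArg Finset.card (Finset.filter_congr fun i _ => prefix_lpow_rotate_iff u w hw i)

lemma occursAt_wInv (u w : List (Letter n)) (i : ℤ) :
    OccursAt u (wInv w) i ↔ OccursAt (wInv u) w (-u.length - i) := by
  have hinj : Injective (Option.map (linv (n := n))) :=
    Option.map_injective (LeftInverse.injective linv_linv)
  have mirror (j : ℕ) (hj : j < u.length) :
      u[u.length - 1 - j]? = cyclicGet (wInv w) (i + ↑(u.length - 1 - j)) ↔
        (wInv u)[j]? = cyclicGet w (-u.length - i + j) := by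
    rw [getElem?_wInv u hj, cyclicGet_wInv, ← hinj.eq_iff, option_map_linv_linv,
      Nat.sub_sub, Nat.cast_sub (by omega)]
    push_cast
    ring_nf
  constructor
  · intro h j hj
    rw [wInv_length] at hj
    exact (mirror j hj).1 (h _ (by omega))
  · intro h j hj
    have := (mirror (u.length - 1 - j) (by omega)).2 (h _ (by simp; omega))
    rwa [Nat.sub_sub_self (by omega)] at this

lemma orientedOcc_rotate (u w : List (Letter n)) (r : ℕ) :
    orientedOcc u (w.rotate r) = orientedOcc u w := by
  simp only [orientedOcc_eq_card, length_rotate, occursAt_rotate]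
  exact (occursAt_periodic u w).card_filter_range_add r

lemma orientedOcc_wInv (u w : List (Letter n)) :
    orientedOcc u (wInv w) = orientedOcc (wInv u) w := by
  simp only [orientedOcc_eq_card, wInv_length, occursAt_wInv]
  exact (occursAt_periodic (wInv u) w).card_filter_range_sub _

lemma orientedOcc_lpow (u w : List (Letter n)) {l : ℕ} (hl : 0 < l) :
    orientedOcc u (lpow w l) = l * orientedOcc u w := by
  simp only [orientedOcc_eq_card, lpow_length, occursAt_lpow u w hl]
  exact (occursAt_periodic u w).card_filter_range_mul l

lemma occ_eq_orientedOcc_add (u w : List (Letter n)) :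
    occ u w = orientedOcc u w + orientedOcc u (wInv w) := by
  rw [occ, orientedOcc_wInv]

lemma occ_rotate (u w : List (Letter n)) (r : ℕ) : occ u (w.rotate r) = occ u w := by
  simp only [occ, orientedOcc_rotate]

lemma occ_wInv_right (u w : List (Letter n)) : occ u (wInv w) = occ u w := by
  rw [occ_eq_orientedOcc_add, occ_eq_orientedOcc_add, wInv_wInv, add_comm]

lemma occ_lpow (u w : List (Letter n)) {l : ℕ} (hl : 0 < l) : occ u (lpow w l) = l * occ u w := by
  simp only [occ, orientedOcc_lpow _ _ hl, mul_add]

lemma SameCyclicWord.occ_eq {v w : List (Letter n)} (h : SameCyclicWord v w)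
    (u : List (Letter n)) : occ u w = occ u v := by
  rcases h with ⟨i, rfl⟩ | ⟨i, rfl⟩ <;> simp only [occ_rotate, occ_wInv_right]

end Occurrences

section Separation

variable {α : Type*}

lemma getElem?_take_lpow {v : List α} (hv : v ≠ []) {k j : ℕ} (hj : j < k) :
    (take k (lpow v k))[j]? = cyclicGet v j := by
  have hL := length_pos_iff.2 hv
  rw [getElem?_take_of_lt hj, getElem?_lpow v (by nlinarith), cyclicGet_natCast]

lemma length_take_lpow {v : List α} (hv : v ≠ []) (k : ℕ) : (take k (lpow v k)).length = k := by
  have hL := length_pos_iff.2 hv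
  simp only [length_take, lpow_length]
  exact min_eq_left (Nat.le_mul_of_pos_right k hL)

lemma occursAt_take_lpow_self {v : List α} (hv : v ≠ []) (k : ℕ) :
    OccursAt (take k (lpow v k)) v 0 := fun j hj => by
  rw [length_take_lpow hv] at hj
  rw [getElem?_take_lpow hv hj, zero_add]

/-- The two periodic sequences agree on `|v| + |w|` letters, hence everywhere; by primitivity
each length then divides the other. -/
lemma Primitive.eq_of_occursAt_take_lpow {v w : List α} (hv : Primitive v) (hw : Primitive w)
    {k : ℕ} (hk : v.length + w.length ≤ k) (h : OccursAt (take k (lpow v k)) w 0) : v = w := by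
  have hp := length_pos_iff.2 hv.1
  have hq := length_pos_iff.2 hw.1
  have hvw : cyclicGet v = cyclicGet w :=
    (cyclicGet_periodic v).eq_of_eqOn_Ico_add hp hq (cyclicGet_periodic w) fun t ht => by
      lift t to ℕ using ht.1
      have htk : t < k := by have := ht.2; omega
      rw [← getElem?_take_lpow hv.1 htk, h t (by rwa [length_take_lpow hv.1]), zero_add]
  refine eq_of_cyclicGet_eq (Nat.dvd_antisymm ?_ ?_) hvw
  · exact hv.dvd_of_periodic hq (hvw ▸ cyclicGet_periodic w)
  · exact hw.dvd_of_periodic hp (hvw ▸ cyclicGet_periodic v)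

variable {n : ℕ}

lemma occ_take_lpow_self_ne_zero {v : List (Letter n)} (hv : v ≠ []) (k : ℕ) :
    occ (take k (lpow v k)) v ≠ 0 := by
  rw [occ_eq_orientedOcc_add, orientedOcc_eq_card]
  refine Nat.pos_iff_ne_zero.1 (Nat.add_pos_left (Finset.card_pos.2 ⟨0, ?_⟩) _)
  simpa [length_pos_iff.2 hv] using occursAt_take_lpow_self hv k

lemma exists_rotate_eq_of_orientedOcc_ne_zero {v w : List (Letter n)} (hv : Primitive v)
    (hw : Primitive w) {k : ℕ} (hk : v.length + w.length ≤ k)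
    (h : orientedOcc (take k (lpow v k)) w ≠ 0) : ∃ i, v = w.rotate i := by
  obtain ⟨i, hi⟩ := Finset.card_ne_zero.1 (orientedOcc_eq_card _ w ▸ h)
  refine ⟨i, hv.eq_of_occursAt_take_lpow ((primitive_rotate_iff i).2 hw) (by simpa using hk) ?_⟩
  rw [occursAt_rotate, zero_add]
  exact (Finset.mem_filter.1 hi).2

lemma Primitive.sameCyclicWord_of_occ_take_lpow_ne_zero {v w : List (Letter n)}
    (hv : Primitive v) (hw : Primitive w) {k : ℕ} (hk : v.length + w.length ≤ k)
    (h : occ (take k (lpow v k)) w ≠ 0) : SameCyclicWord w v := by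
  rw [occ_eq_orientedOcc_add] at h
  by_cases h0 : orientedOcc (take k (lpow v k)) w = 0
  · rw [h0, zero_add] at h
    exact Or.inr (exists_rotate_eq_of_orientedOcc_ne_zero hv (primitive_wInv_iff.2 hw)
      (by simpa using hk) h)
  · exact Or.inl (exists_rotate_eq_of_orientedOcc_ne_zero hv hw hk h0)

end Separation

section CyclicWords

variable {n : ℕ}

lemma reduced_lpow {w : List (Letter n)} (hw : CyclicallyReduced w) (m : ℕ) :
    Reduced (lpow w m) := by
  induction m with
  | zero => exact isChain_nil
  | succ m ih =>
    refine isChain_append.2 ⟨hw.1, ih, fun a ha b hb => ?_⟩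
    rcases Nat.eq_zero_or_pos m with rfl | hm
    · simp [lpow] at hb
    · rw [head?_lpow w hm] at hb
      exact hw.2 b a hb ha

lemma CyclicallyReduced.of_lpow {u : List (Letter n)} {m : ℕ} (hm : 0 < m)
    (h : CyclicallyReduced (lpow u m)) : CyclicallyReduced u := by
  refine ⟨IsChain.prefix h.1 ?_, fun a b ha hb => h.2 a b ?_ ?_⟩
  · obtain ⟨m, rfl⟩ : ∃ m', m = m' + 1 := ⟨m - 1, by omega⟩
    exact prefix_append u _
  · rwa [head?_lpow u hm]
  · rwa [getLast?_lpow u hm]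

lemma pik_mk (k : ℕ) (w : List (Letter n)) (u : RW n k) : pik n k w ⟦u⟧ = occ u.val w := rfl

lemma SameCyclicWord.pik_eq {v w : List (Letter n)} (h : SameCyclicWord v w) (k : ℕ) :
    pik n k w = pik n k v := by
  funext U
  induction U using Quotient.ind
  simp only [pik_mk, h.occ_eq]

lemma pik_lpow (k : ℕ) (w : List (Letter n)) {l : ℕ} (hl : 0 < l) :
    pik n k (lpow w l) = (l : ℤ) • pik n k w := by
  funext U
  induction U using Quotient.ind
  simp [pik_mk, occ_lpow _ _ hl]

def piCyclic (n : ℕ) : CWord n → ∀ k : ℕ, Mk n (k + 1) :=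
  Quot.lift (fun v k => pik n (k + 1) v.1) fun _ _ h => funext fun k =>
    (SameCyclicWord.pik_eq h (k + 1)).symm

def IsPrimitiveCyclicWord : CWord n → Prop :=
  Quot.lift (fun v => Primitive v.1) fun _ _ h => propext (SameCyclicWord.primitive_iff h).symm

lemma cwOut_spec (W : CWord n) : Quot.mk (cwrel n) (cwOut W) = W :=
  (Quot.exists_rep W).choose_spec

lemma piCyclic_eq (W : CWord n) : piCyclic n W = fun k => pik n (k + 1) (cwOut W).1 := by
  conv_lhs => rw [← cwOut_spec W]
  rfl

lemma isPrimitiveCyclicWord_iff (W : CWord n) :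
    IsPrimitiveCyclicWord W ↔ Primitive (cwOut W).1 := by
  conv_lhs => rw [← cwOut_spec W]
  rfl

lemma piMap_eq_linearCombination : piMap n = Finsupp.linearCombination ℤ (piCyclic n) :=
  Finsupp.lhom_ext fun W c => by
    rw [piMap, Finsupp.lift_apply, Finsupp.sum_single_index (by simp),
      Finsupp.linearCombination_single, piCyclic_eq]

lemma linearCombination_piCyclic_apply (z : ZC n) (k : ℕ) (U : RW n (k + 1)) :
    Finsupp.linearCombination ℤ (piCyclic n) z k ⟦U⟧ =
      ∑ W ∈ z.support, z W * occ U.val (cwOut W).1 := by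
  simp [Finsupp.linearCombination_apply, Finsupp.sum, Finset.sum_apply, piCyclic_eq, pik_mk]

def powerRelations (n : ℕ) : Set (ZC n) :=
  { x : ZC n |
    ∃ (w : List (Letter n)) (hw : w ≠ [] ∧ CyclicallyReduced w)
      (l : ℕ) (_ : 1 ≤ l)
      (hwl : lpow w l ≠ [] ∧ CyclicallyReduced (lpow w l)),
      x = (l : ℤ) • Finsupp.single (Quot.mk (cwrel n) ⟨w, hw⟩) (1 : ℤ)
          - Finsupp.single (Quot.mk (cwrel n) ⟨lpow w l, hwl⟩) (1 : ℤ) }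

lemma span_powerRelations_le_ker :
    Submodule.span ℤ (powerRelations n) ≤ LinearMap.ker (piMap n) := by
  rw [Submodule.span_le]
  rintro _ ⟨w, hw, l, hl, hwl, rfl⟩
  refine LinearMap.mem_ker.2 ?_
  rw [piMap_eq_linearCombination]
  -- `erw`: the generators are built from `Quot.mk`, whose type `Quot (cwrel n)` is `CWord n`
  -- only after unfolding.
  erw [map_sub, map_smul, Finsupp.linearCombination_single, Finsupp.linearCombination_single]
  rw [one_smul, one_smul, sub_eq_zero]
  funext k
  exact (pik_lpow (k + 1) w hl).symm

/-- Modulo the power relations, `[r ^ m] ≡ m • [r]` with `r` primitive. -/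
lemma mem_span_powerRelations_sup_supported (x : ZC n) :
    x ∈ Submodule.span ℤ (powerRelations n) ⊔
      Finsupp.supported ℤ ℤ {W | IsPrimitiveCyclicWord W} := by
  induction x using Finsupp.induction_linear with
  | zero => exact zero_mem _
  | add x y hx hy => exact add_mem hx hy
  | single W c =>
    rw [← mul_one c, ← Finsupp.smul_single']
    refine Submodule.smul_mem _ c ?_
    induction W using Quot.ind with
    | mk v =>
      obtain ⟨w, hw⟩ := v
      obtain ⟨u, m, hu, hm, rfl⟩ := exists_primitive_lpow hw.1
      let r : CWS n := ⟨u, hu.1, hw.2.of_lpow hm⟩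
      have hgen : (m : ℤ) • (Finsupp.single (Quot.mk _ r) 1 : ZC n) -
          (Finsupp.single (Quot.mk _ ⟨lpow u m, hw⟩) 1 : ZC n) ∈ powerRelations n :=
        ⟨u, r.2, m, hm, hw, rfl⟩
      have hr : Quot.mk (cwrel n) r ∈ {W | IsPrimitiveCyclicWord W} := hu
      exact Submodule.mem_sup.2 ⟨_, neg_mem (Submodule.subset_span hgen), _,
        Submodule.smul_mem _ (m : ℤ) (Finsupp.single_mem_supported ℤ 1 hr), by abel⟩

lemma linearIndepOn_piCyclic :
    LinearIndepOn ℤ (piCyclic n) {W | IsPrimitiveCyclicWord W} := by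
  rw [linearIndepOn_iff]
  intro z hz hz0
  by_contra hne
  obtain ⟨W₁, hW₁⟩ := Finsupp.support_nonempty_iff.2 hne
  have hprim : ∀ W ∈ z.support, Primitive (cwOut W).1 :=
    fun W hW => (isPrimitiveCyclicWord_iff W).1 (hz hW)
  set B := z.support.sup fun W => (cwOut W).1.length
  have hB : ∀ W ∈ z.support, (cwOut W).1.length ≤ B :=
    fun W hW => Finset.le_sup (f := fun W => (cwOut W).1.length) hW
  set v₁ := (cwOut W₁).1
  have hv₁ : v₁ ≠ [] := (cwOut W₁).2.1
  let U : RW n (2 * B + 1) := ⟨take (2 * B + 1) (lpow v₁ (2 * B + 1)),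
    IsChain.prefix (reduced_lpow (cwOut W₁).2.2 _) (take_prefix _ _), length_take_lpow hv₁ _⟩
  have hsum := congrFun (congrFun hz0 (2 * B)) ⟦U⟧
  rw [linearCombination_piCyclic_apply, Finset.sum_eq_single_of_mem W₁ hW₁] at hsum
  · exact Finsupp.mem_support_iff.1 hW₁
      ((mul_eq_zero.1 hsum).resolve_right (by exact_mod_cast occ_take_lpow_self_ne_zero hv₁ _))
  · intro W hW hne
    suffices occ U.val (cwOut W).1 = 0 by simp [this]
    by_contra hocc
    have hsame := (hprim W₁ hW₁).sameCyclicWord_of_occ_take_lpow_ne_zero (hprim W hW)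
      (by linarith [hB W hW, hB W₁ hW₁]) hocc
    exact hne (by rw [← cwOut_spec W, ← cwOut_spec W₁]; exact Quot.sound hsame)

end CyclicWords

/-- The kernel of `π : ℤ[C] → Π_{k ≥ 1} M_k` is the submodule of
`ℤ[C]` generated by the elements `l·[w] - [w^l]` for `w` a nonempty cyclically reduced
word and `l ≥ 1`. -/
theorem kernel_of_pi (n : ℕ) :
    LinearMap.ker (piMap n) =
      Submodule.span ℤ
        { x : ZC n |
          ∃ (w : List (Letter n)) (hw : w ≠ [] ∧ CyclicallyReduced w)
            (l : ℕ) (_ : 1 ≤ l)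
            (hwl : lpow w l ≠ [] ∧ CyclicallyReduced (lpow w l)),
            x = (l : ℤ) • Finsupp.single (Quot.mk (cwrel n) ⟨w, hw⟩) (1 : ℤ)
                - Finsupp.single (Quot.mk (cwrel n) ⟨lpow w l, hwl⟩) (1 : ℤ) } := by
  change _ = Submodule.span ℤ (powerRelations n)
  refine le_antisymm (fun x hx => ?_) span_powerRelations_le_ker
  obtain ⟨y, hy, z, hz, rfl⟩ := Submodule.mem_sup.1 (mem_span_powerRelations_sup_supported x)
  have hπz : Finsupp.linearCombination ℤ (piCyclic n) z = 0 := by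
    rwa [LinearMap.mem_ker, map_add, span_powerRelations_le_ker hy, zero_add,
      piMap_eq_linearCombination] at hx
  rwa [linearIndepOn_iff.1 linearIndepOn_piCyclic z hz hπz, add_zero]
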